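/- arXiv:1812.11119 — 5 statements merged into one kernel-verified Lean document; each statement's English description precedes it below -/
import Mathlib

section
/- If a word u has periods p and q, and |u| ≥ p + q − gcd(p,q), then u has period gcd(p,q). -/
/-- `w` has period `p`: `w[i] = w[i+p]` whenever both positions exist. -/
def HasPeriod {α : Type*} (w : List α) (p : ℕ) : Prop :=
  ∀ i, (h : i + p < w.length) → w.get ⟨i, by omega⟩ = w.get ⟨i + p, h⟩

/-- A finite word is cube-free if it has no nonempty factor of the form `x ++ x ++ x`. -/
def Cubefree {α : Type*} (w : List α) : Prop :=
  ∀ x : List α, x ≠ [] → ¬ (x ++ x ++ x) <:+: w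

/-- `x` is a factor of the infinite word `w`. -/
def FactorOfInf {α : Type*} (x : List α) (w : ℕ → α) : Prop :=
  ∃ i, x = (List.range x.length).map fun k => w (i + k)

/-- An infinite word is cube-free if all its finite factors are cube free. -/
def CubefreeInf {α : Type*} (w : ℕ → α) : Prop :=
  ∀ x : List α, x ≠ [] → ¬ FactorOfInf (x ++ x ++ x) w

/-- Concatenation of a finite word and an infinite word. -/
def catInf {α : Type*} (u : List α) (w : ℕ → α) : ℕ → α :=
  fun k => if h : k < u.length then u.get ⟨k, h⟩ else w (k - u.length)

/-- The Thue–Morse morphism over `Bool` (`false` = a, `true` = b): `c ↦ c (¬c)`. -/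
def theta (w : List Bool) : List Bool := w.flatMap fun c => [c, !c]

/-- The Thue–Morse word over `Bool` (`false` = a, `true` = b), 0-indexed. -/
def tm : ℕ → Bool := fun n => (Nat.digits 2 n).sum % 2 == 1

/-- A binary word is uniform if it is `c ++ θ(u) ++ d` with `c, d` empty or a single letter. -/
def Uniform (w : List Bool) : Prop :=
  ∃ c u d : List Bool, c.length ≤ 1 ∧ d.length ≤ 1 ∧ w = c ++ theta u ++ d

/-- A binary word is right aligned if it is `c ++ θ(u)` with `c` empty or a single letter. -/
def RightAligned (w : List Bool) : Prop :=
  ∃ c u : List Bool, c.length ≤ 1 ∧ w = c ++ theta u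

/-- The four markers aabaa, ababa, babab, bbabb. -/
def markers : List (List Bool) :=
  [[false,false,true,false,false], [false,true,false,true,false],
   [true,false,true,false,true], [true,true,false,true,true]]

/-- The finite word `x` occurs in the infinite word `w` at position `i`. -/
def MatchesAt {α : Type*} (x : List α) (w : ℕ → α) (i : ℕ) : Prop :=
  ∀ k, (h : k < x.length) → x.get ⟨k, h⟩ = w (i + k)

/-- `u` is T-extendable: for some finite `w` and some position `n`,
`u ++ w ++ T[n..∞)` is cube free. -/
def TExtendable (u : List Bool) : Prop :=
  ∃ (w : List Bool) (n : ℕ), CubefreeInf (catInf (u ++ w) fun k => tm (n + k))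

/-- `u` is right extendable: some infinite extension of `u` is cube free. -/
def RightExtendable {α : Type*} (u : List α) : Prop :=
  ∃ x : ℕ → α, CubefreeInf (catInf u x)

theorem hasPeriod_iff_list_hasPeriod {α : Type*} (w : List α) (p : ℕ) :
    HasPeriod w p ↔ w.HasPeriod p := by
  rw [List.hasPeriod_iff_getElem?]
  refine forall_congr' fun i => ⟨fun h hi => ?_, fun h hi => ?_⟩
  · simpa [List.getElem?_eq_getElem (show i < w.length by omega),
      List.getElem?_eq_getElem (show i + p < w.length by omega)] using h (by omega)
  · simpa [List.getElem?_eq_getElem (show i < w.length by omega),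
      List.getElem?_eq_getElem hi] using h (by omega)

theorem fine_wilf_general {α : Type*} (w : List α) (p q : ℕ)
    (hwp : HasPeriod w p) (hwq : HasPeriod w q)
    (hlen : p + q - Nat.gcd p q ≤ w.length) :
    HasPeriod w (Nat.gcd p q) := by
  rw [hasPeriod_iff_list_hasPeriod] at hwp hwq ⊢
  exact hwp.gcd hwq hlen

theorem fine_wilf {α : Type*} (w : List α) (p q : ℕ)
    (hp0 : 0 < p) (hp : p < w.length) (hq0 : 0 < q) (hq : q < w.length)
    (hwp : HasPeriod w p) (hwq : HasPeriod w q)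
    (hlen : p + q - Nat.gcd p q ≤ w.length) :
    HasPeriod w (Nat.gcd p q) :=
  fine_wilf_general w p q hwp hwq hlen
end

section
/- A binary cube-free word is non-uniform if and only if it contains at least one of the factors aabaa, aababaa, bbabb, bbababb. -/
/-! Call `i` a repeat of `w` if `w[i] = w[i+1]`. Since `θ(u)` has its repeats exactly at the odd
positions, a binary word is uniform iff all its repeats have the same parity. A non-uniform word
therefore has two repeats at odd distance `d` with no repeat strictly between them, so the factor
from the first to the second is `a a (b a)^((d-1)/2) a`. For `d = 1` this contains the cube `aaa`,
for `d ≥ 7` the cube `(ab)^3`; cube-freeness leaves `d = 3` and `d = 5`, i.e. `aabaa` and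
`aababaa` up to exchanging the letters. Conversely each of the four factors has repeats at
positions `0` and `3` or `0` and `5`. -/

def IsRepeatAt {α : Type*} (w : List α) (i : ℕ) : Prop :=
  ∃ a, w[i]? = some a ∧ w[i + 1]? = some a

section IsRepeatAt

variable {α : Type*} {w x c d : List α} {i n : ℕ}

theorem IsRepeatAt.add_one_lt_length (h : IsRepeatAt w i) : i + 1 < w.length := by
  obtain ⟨a, -, h⟩ := h
  exact (List.getElem?_eq_some_iff.mp h).1

theorem isRepeatAt_cons_succ {a : α} : IsRepeatAt (a :: w) (i + 1) ↔ IsRepeatAt w i := by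
  simp [IsRepeatAt]

theorem isRepeatAt_drop : IsRepeatAt (w.drop n) i ↔ IsRepeatAt w (n + i) := by
  simp [IsRepeatAt, Nat.add_assoc]

theorem IsRepeatAt.of_take (h : IsRepeatAt (w.take n) i) : IsRepeatAt w i := by
  obtain ⟨a, h₀, h₁⟩ := h
  simp only [List.getElem?_take] at h₀ h₁
  split_ifs at h₀ h₁
  exact ⟨a, h₀, h₁⟩

theorem IsRepeatAt.append_left (h : IsRepeatAt w i) : IsRepeatAt (w ++ d) i := by
  obtain ⟨a, h₀, h₁⟩ := h
  have := (List.getElem?_eq_some_iff.mp h₁).1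
  exact ⟨a, by rw [List.getElem?_append_left (by omega), h₀],
    by rw [List.getElem?_append_left (by omega), h₁]⟩

theorem IsRepeatAt.of_append_left (h : IsRepeatAt (w ++ d) i) (hi : i + 1 < w.length) :
    IsRepeatAt w i := by
  obtain ⟨a, h₀, h₁⟩ := h
  rw [List.getElem?_append_left (by omega)] at h₀ h₁
  exact ⟨a, h₀, h₁⟩

theorem isRepeatAt_append_right : IsRepeatAt (c ++ w) (c.length + i) ↔ IsRepeatAt w i := by
  simp [IsRepeatAt, List.getElem?_append_right, Nat.add_assoc]

theorem IsRepeatAt.of_infix (hx : x <:+: w) :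
    ∃ k, ∀ i, IsRepeatAt x i → IsRepeatAt w (k + i) := by
  obtain ⟨s, t, rfl⟩ := hx
  exact ⟨s.length, fun i hi => (isRepeatAt_append_right.mpr hi).append_left⟩

end IsRepeatAt

theorem infix_of_getElem? {α : Type*} {x w : List α} (i : ℕ)
    (h : ∀ k < x.length, w[i + k]? = x[k]?) : x <:+: w := by
  rcases x.eq_nil_or_concat with rfl | ⟨y, b, rfl⟩
  · exact List.nil_infix
  rw [List.infix_iff_getElem?]
  refine ⟨i, ?_, fun k hk => by rw [Nat.add_comm, h k hk, List.getElem?_eq_getElem hk]⟩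
  · have := h y.length (by simp)
    simp only [List.concat_eq_append, List.getElem?_append_right le_rfl, Nat.sub_self,
      List.getElem?_singleton] at this
    have := (List.getElem?_eq_some_iff.mp this).1
    simp only [List.concat_eq_append, List.length_append, List.length_singleton]
    omega

section Theta

variable {v : List Bool} {i : ℕ}

theorem theta_cons (a : Bool) (v : List Bool) : theta (a :: v) = a :: (!a) :: theta v := rfl

theorem length_theta : (theta v).length = 2 * v.length := by
  induction v with
  | nil => rfl
  | cons a v ih => simp only [theta_cons, List.length_cons, ih]; ring

theorem not_isRepeatAt_theta (hi : i % 2 = 0) : ¬ IsRepeatAt (theta v) i := by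
  induction v generalizing i with
  | nil => simp [IsRepeatAt, theta]
  | cons a v ih =>
    match i, hi with
    | 0, _ => simp [IsRepeatAt, theta_cons]
    | k + 2, hk => rw [theta_cons, isRepeatAt_cons_succ, isRepeatAt_cons_succ]; exact ih (by omega)

theorem exists_theta_eq : ∀ z : List Bool, z.length % 2 = 0 →
    (∀ i, IsRepeatAt z i → i % 2 = 1) → ∃ v, theta v = z
  | [], _, _ => ⟨[], rfl⟩
  | [_], hz, _ => absurd hz (by simp)
  | x :: y :: z, hz, h => by
    have hy : y = !x := Bool.eq_not_iff.mpr fun hxy => by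
      simpa using h 0 ⟨x, rfl, by simp [hxy]⟩
    have hz' : z.length % 2 = 0 := by simp only [List.length_cons] at hz; omega
    obtain ⟨v, hv⟩ := exists_theta_eq z hz' fun i hi => by
      have := h (i + 2) (isRepeatAt_cons_succ.mpr (isRepeatAt_cons_succ.mpr hi))
      omega
    exact ⟨x :: v, by rw [theta_cons, hv, hy]⟩

end Theta

theorem uniform_iff_exists_parity {w : List Bool} :
    Uniform w ↔ ∃ p, ∀ i, IsRepeatAt w i → i % 2 = p := by
  constructor
  · rintro ⟨c, v, d, hc, hd, rfl⟩
    refine ⟨(c.length + 1) % 2, fun i hi => ?_⟩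
    have hlen := hi.add_one_lt_length
    simp only [List.length_append, length_theta] at hlen
    by_contra hp
    have hcv : IsRepeatAt (c ++ theta v) i :=
      hi.of_append_left (by simp only [List.length_append, length_theta]; omega)
    rw [show i = c.length + (i - c.length) by omega, isRepeatAt_append_right] at hcv
    exact not_isRepeatAt_theta (by omega) hcv
  · rintro ⟨p, hp⟩
    set r := w.drop ((p + 1) % 2)
    set m := 2 * (r.length / 2)
    have hm : (r.take m).length % 2 = 0 := by simp only [List.length_take, m]; omega
    obtain ⟨v, hv⟩ := exists_theta_eq (r.take m) hm fun i hi => by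
      have := hp _ (isRepeatAt_drop.mp hi.of_take)
      omega
    refine ⟨w.take ((p + 1) % 2), v, r.drop m, by simp only [List.length_take]; omega,
      by simp only [List.length_drop, m]; omega, ?_⟩
    rw [hv, List.append_assoc, List.take_append_drop, List.take_append_drop]

theorem not_uniform_of_infix {w x : List Bool} (hx : x <:+: w) {i j : ℕ}
    (hi : IsRepeatAt x i) (hj : IsRepeatAt x j) (hij : i % 2 ≠ j % 2) : ¬ Uniform w := by
  obtain ⟨k, hk⟩ := IsRepeatAt.of_infix hx
  rw [uniform_iff_exists_parity]
  rintro ⟨p, hp⟩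
  have := hp _ (hk i hi)
  have := hp _ (hk j hj)
  omega

theorem exists_odd_gap_of_mod_two_ne {P : ℕ → Prop} {i j : ℕ} (hi : P i) (hj : P j)
    (hij : i % 2 ≠ j % 2) :
    ∃ n d, d % 2 = 1 ∧ P n ∧ P (n + d) ∧ ∀ k, n < k → k < n + d → ¬ P k := by
  classical
  have hex : ∃ d, d % 2 = 1 ∧ ∃ i, P i ∧ P (i + d) := by
    rcases Nat.lt_or_gt_of_ne (show i ≠ j by omega) with h | h
    · exact ⟨j - i, by omega, i, hi, by rwa [Nat.add_sub_cancel' h.le]⟩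
    · exact ⟨i - j, by omega, j, hj, by rwa [Nat.add_sub_cancel' h.le]⟩
  obtain ⟨hd, i, hi, hid⟩ := Nat.find_spec hex
  refine ⟨i, Nat.find hex, hd, hi, hid, fun k hik hkd hk => ?_⟩
  -- `k` splits the gap into two shorter ones, one of them odd
  rcases Nat.mod_two_eq_zero_or_one (k - i) with h | h
  · refine Nat.find_min hex (m := i + Nat.find hex - k) (by omega) ⟨by omega, k, hk, ?_⟩
    rwa [Nat.add_sub_cancel' hkd.le]
  · refine Nat.find_min hex (m := k - i) (by omega) ⟨h, i, hi, ?_⟩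
    rwa [Nat.add_sub_cancel' hik.le]

theorem getElem?_add_eq_iterate_not {w : List Bool} {i m : ℕ} {a : Bool} (ha : w[i]? = some a)
    (hrun : ∀ k, i ≤ k → k < i + m → ¬ IsRepeatAt w k) (hm : i + m < w.length) :
    w[i + m]? = some ((!·)^[m] a) := by
  induction m with
  | zero => simpa using ha
  | succ m ih =>
    have hprev := ih (fun k hik hkm => hrun k hik (by omega)) (by omega)
    have hnext : w[i + m + 1]? = some w[i + m + 1] := List.getElem?_eq_getElem _
    rw [Function.iterate_succ_apply', ← Nat.add_assoc, hnext, Option.some_inj,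
      Bool.eq_not_iff]
    exact fun h => hrun (i + m) (by omega) (by omega) ⟨_, hprev, h ▸ hnext⟩

theorem exists_forbidden_factor_of_odd_gap {w : List Bool} (hcf : Cubefree w) {i d : ℕ}
    (hd : d % 2 = 1) (hi : IsRepeatAt w i) (hid : IsRepeatAt w (i + d))
    (hgap : ∀ k, i < k → k < i + d → ¬ IsRepeatAt w k) :
    ∃ a, [a, a, !a, a, a] <:+: w ∨ [a, a, !a, a, !a, a, a] <:+: w := by
  obtain ⟨a, ha₀, ha₁⟩ := hi
  have hlen := hid.add_one_lt_length
  have hrun : ∀ m, 1 ≤ m → m ≤ d → w[i + m]? = some ((!·)^[m - 1] a) := by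
    intro m h₁ h₂
    have := getElem?_add_eq_iterate_not ha₁ (fun k hk hk' => hgap k (by omega) (by omega))
      (m := m - 1) (by omega)
    rwa [Nat.add_assoc, Nat.add_sub_cancel' h₁] at this
  -- stated for all `m` so that `simp` can rewrite with it once `d` is a numeral
  have hend : ∀ m, m = d + 1 → w[i + m]? = some ((!·)^[d - 1] a) := by
    rintro m rfl
    obtain ⟨b, hb, hb'⟩ := hid
    rw [← Nat.add_assoc, hb', ← hb, hrun d (by omega) le_rfl]
  refine ⟨a, ?_⟩
  have hd1 : d ≠ 1 := by
    rintro rfl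
    refine hcf [a] (by simp) (infix_of_getElem? i fun k hk => ?_)
    simp only [List.cons_append, List.nil_append, List.length_cons, List.length_nil] at hk
    interval_cases k <;> simp (disch := omega) only [Nat.add_zero, ha₀, hrun, hend] <;> simp
  have hd7 : d < 7 := by
    by_contra
    refine hcf [a, !a] (by simp) (infix_of_getElem? (i + 1) fun k hk => ?_)
    simp only [List.cons_append, List.nil_append, List.length_cons, List.length_nil] at hk
    interval_cases k <;>
      simp (disch := omega) only [Nat.add_assoc, Nat.reduceAdd, hrun] <;> simp
  obtain rfl | rfl : d = 3 ∨ d = 5 := by omega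
  · refine .inl (infix_of_getElem? i fun k hk => ?_)
    simp only [List.length_cons, List.length_nil] at hk
    interval_cases k <;> simp (disch := omega) only [Nat.add_zero, ha₀, hrun, hend] <;> simp
  · refine .inr (infix_of_getElem? i fun k hk => ?_)
    simp only [List.length_cons, List.length_nil] at hk
    interval_cases k <;> simp (disch := omega) only [Nat.add_zero, ha₀, hrun, hend] <;> simp

theorem nonuniform_iff_forbidden_factor (u : List Bool) (hcf : Cubefree u) :
    ¬ Uniform u ↔
      ([false,false,true,false,false] <:+: u ∨
       [false,false,true,false,true,false,false] <:+: u ∨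
       [true,true,false,true,true] <:+: u ∨
       [true,true,false,true,false,true,true] <:+: u) := by
  constructor
  · intro hnu
    obtain ⟨i, hi, hi0⟩ : ∃ i, IsRepeatAt u i ∧ i % 2 ≠ 0 := by
      by_contra! h
      exact hnu (uniform_iff_exists_parity.mpr ⟨0, h⟩)
    obtain ⟨j, hj, hj1⟩ : ∃ j, IsRepeatAt u j ∧ j % 2 ≠ 1 := by
      by_contra! h
      exact hnu (uniform_iff_exists_parity.mpr ⟨1, h⟩)
    obtain ⟨i, d, hd, hi, hid, hgap⟩ := exists_odd_gap_of_mod_two_ne hi hj (by omega)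
    obtain ⟨a, h⟩ := exists_forbidden_factor_of_odd_gap hcf hd hi hid hgap
    cases a <;> simp only [Bool.not_false, Bool.not_true] at h <;> tauto
  · rintro (h | h | h | h)
    · exact not_uniform_of_infix h (i := 0) (j := 3) ⟨_, rfl, rfl⟩ ⟨_, rfl, rfl⟩ nofun
    · exact not_uniform_of_infix h (i := 0) (j := 5) ⟨_, rfl, rfl⟩ ⟨_, rfl, rfl⟩ nofun
    · exact not_uniform_of_infix h (i := 0) (j := 3) ⟨_, rfl, rfl⟩ ⟨_, rfl, rfl⟩ nofun
    · exact not_uniform_of_infix h (i := 0) (j := 5) ⟨_, rfl, rfl⟩ ⟨_, rfl, rfl⟩ nofun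
end

section
/- In a binary cube-free word, the factor ababa occurs only as a prefix, as a suffix, or inside an occurrence of the factor aababaa. -/
/-! A letter `b` before `ababa` would create the cube `(ba)³`, and a letter `b` after it the
cube `(ab)³`; so an occurrence of `ababa` away from both ends is flanked by `a` on each side. -/

theorem Cubefree.of_infix {α : Type*} {u w : List α} (hw : Cubefree w) (hu : u <:+: w) :
    Cubefree u :=
  fun x hx hxu => hw x hx (hxu.trans hu)

theorem List.exists_cons_append_cons_of_prefix_drop {α : Type*} {u w : List α} {i : ℕ}
    (hu : u <+: w.drop i) (hi : 0 < i) (hlt : i + u.length < w.length) :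
    ∃ c d t, w.drop (i - 1) = c :: u ++ d :: t := by
  obtain ⟨s, hs⟩ := hu
  obtain ⟨d, t, rfl⟩ : ∃ d t, s = d :: t := by
    cases s with
    | nil =>
      have := congrArg List.length hs
      simp only [List.append_nil, List.length_drop] at this
      omega
    | cons d t => exact ⟨d, t, rfl⟩
  refine ⟨w[i - 1], d, t, ?_⟩
  rw [List.drop_eq_getElem_cons (by omega), Nat.sub_add_cancel hi, ← hs]
  rfl

theorem Cubefree.eq_false_of_cons_ababa_append {c d : Bool}
    (h : Cubefree (c :: [false, true, false, true, false] ++ [d])) : c = false ∧ d = false := by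
  constructor
  · cases c
    · rfl
    · exact absurd ⟨[], [d], rfl⟩ (h [true, false] (by simp))
  · cases d
    · rfl
    · exact absurd ⟨[c], [], rfl⟩ (h [false, true] (by simp))

theorem ababa_occurrence (w : List Bool) (hcf : Cubefree w) (i : ℕ)
    (hocc : [false,true,false,true,false] <+: w.drop i) :
    i = 0 ∨ i + 5 = w.length ∨
      (1 ≤ i ∧ [false,false,true,false,true,false,false] <+: w.drop (i - 1)) := by
  have hlen : i + 5 ≤ w.length := by
    have := hocc.length_le
    simp only [List.length_drop, List.length_cons, List.length_nil] at this
    omega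
  rcases Nat.eq_zero_or_pos i with hi | hi
  · exact Or.inl hi
  rcases hlen.eq_or_lt with hend | hlt
  · exact Or.inr (Or.inl hend)
  obtain ⟨c, d, t, hdrop⟩ := List.exists_cons_append_cons_of_prefix_drop hocc hi hlt
  have hinfix : c :: [false, true, false, true, false] ++ [d] <:+: w :=
    (List.IsPrefix.isInfix ⟨t, by rw [hdrop]; simp⟩).trans (List.drop_suffix _ _).isInfix
  obtain ⟨rfl, rfl⟩ := (hcf.of_infix hinfix).eq_false_of_cons_ababa_append
  exact Or.inr (Or.inr ⟨hi, t, by rw [hdrop]; rfl⟩)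
end

section
/- Let u and v be cube-free binary words such that u has a right context u₁ which is a factor of the Thue–Morse word of length 2|u|, and v has a right context v₁ which is a factor of the Thue–Morse word of length 2|v|. Then there exists a binary word w such that u·w·(reversal of v) is cube-free. -/
lemma tm_zero : tm 0 = false := by simp [tm]

lemma tm_two (n : ℕ) : tm (2 * n) = tm n := by
  rcases Nat.eq_zero_or_pos n with h | h
  · simp [h]
  · unfold tm
    rw [Nat.digits_def' (by norm_num) (by omega)]
    simp [Nat.mul_div_cancel_left _ (by norm_num : 0 < 2), Nat.mul_mod_right]

lemma tm_two_one (n : ℕ) : tm (2 * n + 1) = !tm n := by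
  unfold tm
  rw [Nat.digits_def' (by norm_num) (by omega)]
  have h1 : (2 * n + 1) % 2 = 1 := by omega
  have h2 : (2 * n + 1) / 2 = n := by omega
  rw [h1, h2, List.sum_cons]
  rcases Nat.mod_two_eq_zero_or_one (Nat.digits 2 n).sum with h | h <;>
    simp [Nat.add_mod, h]


lemma tm_step_even (c : ℕ) : tm (2 * c) ≠ tm (2 * c + 1) := by
  rw [tm_two, tm_two_one]; cases tm c <;> simp

lemma tm_no_overlap : ∀ q, 0 < q → ∀ i, ∃ k ≤ q, tm (i + k) ≠ tm (i + k + q) := by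
  intro q
  induction q using Nat.strong_induction_on with
  | _ q ih =>
    intro hq i
    by_contra hcon
    push_neg at hcon
    have hcon' : ∀ m n k, k ≤ q → m = i + k → n = i + k + q → tm m = tm n := by
      rintro m n k hk rfl rfl; exact hcon k hk
    rcases Nat.even_or_odd q with ⟨r, hr⟩ | ⟨r, hr⟩
    · -- q = 2r, r ≥ 1
      have hr1 : 0 < r := by omega
      rcases Nat.even_or_odd i with ⟨a, ha⟩ | ⟨a, ha⟩
      · obtain ⟨k, hk, hne⟩ := ih r (by omega) hr1 a
        have h := hcon' (2 * (a + k)) (2 * (a + k + r)) (2 * k) (by omega) (by omega) (by omega)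
        rw [tm_two, tm_two] at h
        exact hne h
      · obtain ⟨k, hk, hne⟩ := ih r (by omega) hr1 a
        have h := hcon' (2 * (a + k) + 1) (2 * (a + k + r) + 1) (2 * k) (by omega) (by omega) (by omega)
        rw [tm_two_one, tm_two_one] at h
        exact hne (by simpa using h)
    · -- q = 2r+1
      rcases Nat.eq_or_lt_of_le hq with hq1 | hq2
      · -- q = 1
        rcases Nat.even_or_odd i with ⟨a, ha⟩ | ⟨a, ha⟩
        · exact tm_step_even a (hcon' _ _ 0 (by omega) (by omega) (by omega))
        · exact tm_step_even (a + 1) (hcon' _ _ 1 (by omega) (by omega) (by omega))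
      · -- q = 2r+1 ≥ 3, r ≥ 1
        have hr1 : 0 < r := by omega
        have key : ∃ s, tm s = tm (s + 1) ∧ tm (s + 1) = tm (s + 2) := by
          rcases Nat.even_or_odd i with ⟨a, ha⟩ | ⟨a, ha⟩
          · have hss : ∀ j ≤ r, tm (a + r + j) = tm (a + r + j + 1) := by
              intro j hj
              have h1 := hcon' (2 * (a + j)) (2 * (a + j + r) + 1) (2 * j)
                (by omega) (by omega) (by omega)
              rw [tm_two, tm_two_one] at h1
              have h2 := hcon' (2 * (a + j) + 1) (2 * (a + j + r + 1)) (2 * j + 1)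
                (by omega) (by omega) (by omega)
              rw [tm_two_one, tm_two] at h2
              rw [show a + r + j = a + j + r by omega, show a + j + r + 1 = a + j + (r+1) by omega,
                show a + j + (r + 1) = a + j + r + 1 by omega, ← h2, h1]
              cases tm (a + j) <;> simp
            refine ⟨a + r, hss 0 (by omega), ?_⟩
            have := hss 1 (by omega)
            rw [show a + r + 1 + 1 = a + r + 2 by omega] at this
            simpa using this
          · have hss : ∀ j ≤ r, tm (a + j) = tm (a + j + 1) := by
              intro j hj
              have h1 := hcon' (2 * (a + j) + 1) (2 * (a + j + r + 1)) (2 * j)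
                (by omega) (by omega) (by omega)
              rw [tm_two_one, tm_two] at h1
              have h2 := hcon' (2 * (a + j + 1)) (2 * (a + j + r + 1) + 1) (2 * j + 1)
                (by omega) (by omega) (by omega)
              rw [tm_two, tm_two_one] at h2
              rw [show a + j + 1 = a + (j+1) by omega] at h2 ⊢
              rw [h2, ← h1]
              cases tm (a + j) <;> simp
            refine ⟨a, hss 0 (by omega), ?_⟩
            have := hss 1 (by omega)
            rw [show a + 1 + 1 = a + 0 + 2 by omega] at this
            simpa using this
        obtain ⟨s, h1, h2⟩ := key
        rcases Nat.even_or_odd s with ⟨c, hc⟩ | ⟨c, hc⟩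
        · refine tm_step_even c ?_
          rw [show s = 2 * c by omega] at h1
          exact h1
        · refine tm_step_even (c + 1) ?_
          rw [show s + 1 = 2 * (c + 1) by omega, show s + 2 = 2 * (c + 1) + 1 by omega] at h2
          exact h2


lemma tm_pow_add (p s : ℕ) : ∀ n < 2 ^ p, tm (2 ^ p * s + n) = xor (tm s) (tm n) := by
  induction p with
  | zero => intro n hn; interval_cases n; simp [tm_zero]
  | succ p ih =>
    intro n hn
    rcases Nat.even_or_odd n with ⟨m, hm⟩ | ⟨m, hm⟩
    · have e : 2 ^ (p+1) * s + n = 2 * (2 ^ p * s + m) := by ring_nf; omega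
      rw [e, tm_two, ih m (by omega), show n = 2 * m by omega, tm_two]
    · have e : 2 ^ (p+1) * s + n = 2 * (2 ^ p * s + m) + 1 := by ring_nf; omega
      rw [e, tm_two_one, ih m (by omega), hm, tm_two_one]
      cases tm s <;> cases tm m <;> simp

lemma tm_four (m : ℕ) : tm (4 * m) = tm m := by
  rw [show 4 * m = 2 * (2 * m) by ring, tm_two, tm_two]
lemma tm_four_one (m : ℕ) : tm (4 * m + 1) = !tm m := by
  rw [show 4 * m + 1 = 2 * (2 * m) + 1 by ring, tm_two_one, tm_two]
lemma tm_four_two (m : ℕ) : tm (4 * m + 2) = !tm m := by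
  rw [show 4 * m + 2 = 2 * (2 * m + 1) by ring, tm_two, tm_two_one]
lemma tm_four_three (m : ℕ) : tm (4 * m + 3) = tm m := by
  rw [show 4 * m + 3 = 2 * (2 * m + 1) + 1 by ring, tm_two_one, tm_two_one, Bool.not_not]

lemma tm_rev (c : ℕ) : ∀ n < 4 ^ c, tm (4 ^ c - 1 - n) = tm n := by
  induction c with
  | zero => intro n hn; interval_cases n; rfl
  | succ c ih =>
    intro n hn
    have h4 : 0 < 4 ^ c := Nat.pow_pos (by norm_num)
    set m := n / 4 with hm
    set r := n % 4 with hr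
    have hn4 : n = 4 * m + r := by omega
    have hmlt : m < 4 ^ c := by
      have : 4 ^ (c+1) = 4 * 4 ^ c := by ring
      omega
    have key : 4 ^ (c+1) - 1 - n = 4 * (4 ^ c - 1 - m) + (3 - r) := by
      have : 4 ^ (c+1) = 4 * 4 ^ c := by ring
      omega
    rw [key, hn4]
    have hrb : r < 4 := Nat.mod_lt _ (by norm_num)
    interval_cases r <;> (try simp only [Nat.add_zero, Nat.sub_zero, Nat.sub_self])
    · rw [tm_four_three, tm_four, ih m hmlt]
    · rw [show 4 * (4 ^ c - 1 - m) + (3 - 1) = 4 * (4 ^ c - 1 - m) + 2 by rfl,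
        tm_four_two, tm_four_one, ih m hmlt]
    · rw [show 4 * (4 ^ c - 1 - m) + (3 - 2) = 4 * (4 ^ c - 1 - m) + 1 by rfl,
        tm_four_one, tm_four_two, ih m hmlt]
    · rw [tm_four, tm_four_three, ih m hmlt]

def seg (i M : ℕ) : List Bool := (List.range M).map fun k => tm (i + k)

@[simp] lemma seg_length (i M : ℕ) : (seg i M).length = M := by simp [seg]

lemma seg_getElem (i M k : ℕ) (h : k < (seg i M).length) :
    (seg i M)[k] = tm (i + k) := by simp [seg]

lemma seg_append (i A B : ℕ) : seg i (A + B) = seg i A ++ seg (i + A) B := by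
  apply List.ext_getElem (by simp)
  intro k h1 h2
  simp only [seg_length] at h1
  rcases Nat.lt_or_ge k A with h | h
  · rw [seg_getElem, List.getElem_append_left (by simpa using h), seg_getElem]
  · rw [seg_getElem, List.getElem_append_right (by simpa using h), seg_getElem]
    congr 1; simp; omega

lemma seg_reverse (c i M : ℕ) (h : i + M ≤ 4 ^ c) :
    (seg i M).reverse = seg (4 ^ c - i - M) M := by
  apply List.ext_getElem (by simp)
  intro k h1 h2
  simp only [List.length_reverse, seg_length] at h1
  rw [List.getElem_reverse, seg_getElem, seg_getElem]
  have := tm_rev c (i + (M - 1 - k)) (by omega)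
  rw [show i + ((seg i M).length - 1 - k) = i + (M - 1 - k) by simp, ← this]
  congr 1
  omega

lemma seg_shift (e s j M : ℕ) (hs : tm s = false) (h : j + M ≤ 2 ^ e) :
    seg (2 ^ e * s + j) M = seg j M := by
  apply List.ext_getElem (by simp)
  intro k h1 h2
  simp only [seg_length] at h1
  rw [seg_getElem, seg_getElem, show 2 ^ e * s + j + k = 2 ^ e * s + (j + k) by omega,
    tm_pow_add e s (j + k) (by omega), hs]
  simp


lemma getElem_mid {α : Type*} (s x t : List α) (k : ℕ) (hk : k < x.length)
    (h : s.length + k < (s ++ x ++ t).length) :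
    (s ++ x ++ t)[s.length + k] = x[k] := by
  rw [List.getElem_append_left (by simp; omega), List.getElem_append_right (by omega)]
  congr 1
  omega

lemma cube_self_eq {α : Type*} (x : List α) (k : ℕ) (hk : k + x.length < 3 * x.length)
    (h1 : k < (x ++ x ++ x).length) (h2 : k + x.length < (x ++ x ++ x).length) :
    (x ++ x ++ x)[k] = (x ++ x ++ x)[k + x.length] := by
  have hq : 0 < x.length := by simp at h1; omega
  rcases Nat.lt_or_ge k x.length with h | h
  · rw [List.getElem_append_left (as := x ++ x) (by simp; omega),
      List.getElem_append_left (by omega),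
      List.getElem_append_left (as := x ++ x) (by simp; omega),
      List.getElem_append_right (by omega)]
    congr 1; omega
  · have hk2 : k < 2 * x.length := by omega
    rw [List.getElem_append_left (as := x ++ x) (by simp; omega),
      List.getElem_append_right (by omega),
      List.getElem_append_right (as := x ++ x) (by simp; omega)]
    congr 1; simp; omega

lemma cube_period {α : Type*} {x w : List α} (s t : List α)
    (hw : s ++ (x ++ x ++ x) ++ t = w) (k : ℕ) (hk : k + x.length < 3 * x.length)
    (h1 : s.length + k < w.length) (h2 : s.length + k + x.length < w.length) :
    w[s.length + k] = w[s.length + k + x.length] := by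
  subst hw
  rw [getElem_mid s _ t k (by simp; omega) h1]
  simp only [show s.length + k + x.length = s.length + (k + x.length) by omega]
  rw [getElem_mid s _ t (k + x.length) (by simp; omega) (by omega)]
  exact cube_self_eq x k hk (by simp; omega) (by simp; omega)

lemma cube_period' {α : Type*} {x w : List α} (s t : List α)
    (hw : s ++ (x ++ x ++ x) ++ t = w) (k : ℕ) (hk : k + x.length < 3 * x.length)
    (m n : ℕ) (hm : m = s.length + k) (hn : n = s.length + k + x.length)
    (h1 : m < w.length) (h2 : n < w.length) :
    w[m] = w[n] := by
  subst hm; subst hn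
  exact cube_period s t hw k hk h1 h2

lemma infix_take {α : Type*} {x w : List α} (s t : List α) (hw : s ++ x ++ t = w)
    (n : ℕ) (hn : s.length + x.length ≤ n) : x <:+: w.take n := by
  subst hw
  rw [List.append_assoc, List.take_append,
    List.take_of_length_le (show s.length ≤ n by omega),
    List.take_append, List.take_of_length_le (show x.length ≤ n - s.length by omega)]
  exact ⟨s, List.take (n - s.length - x.length) t, by rw [List.append_assoc]⟩

lemma infix_drop {α : Type*} {x w : List α} (s t : List α) (hw : s ++ x ++ t = w)
    (n : ℕ) (hn : n ≤ s.length) : x <:+: w.drop n := by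
  subst hw
  rw [List.append_assoc, List.drop_append,
    show n - s.length = 0 by omega, List.drop_zero]
  exact ⟨s.drop n, t, by rw [List.append_assoc]⟩

lemma cubefree_reverse {w : List Bool} (h : Cubefree w) : Cubefree w.reverse := by
  intro x hx hinf
  apply h x.reverse (by simpa using hx)
  have : (x ++ x ++ x).reverse <:+: w.reverse.reverse := List.reverse_infix.mpr hinf
  rw [List.reverse_reverse] at this
  simpa [List.reverse_append, List.append_assoc] using this

-- THE GLUE LEMMA
lemma glue (u : List Bool) (i M : ℕ) (hM : 2 * u.length ≤ M)
    (hcf : Cubefree (u ++ seg i (2 * u.length))) : Cubefree (u ++ seg i M) := by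
  intro x hx hinf
  obtain ⟨s, t, hw⟩ := hinf
  have hq1 : 0 < x.length := List.length_pos_iff.mpr hx
  have hWlen : (u ++ seg i M).length = u.length + M := by simp [seg_length]
  have htotal : s.length + 3 * x.length + t.length = u.length + M := by
    have := congrArg List.length hw
    simp [seg_length] at this
    omega
  have hmid : ∀ n (h : n < (u ++ seg i M).length), u.length ≤ n →
      (u ++ seg i M)[n] = tm (i + (n - u.length)) := by
    intro n h hn
    rw [List.getElem_append_right (by omega), seg_getElem]
  rcases le_or_gt (s.length + 3 * x.length) (3 * u.length) with hA | hB
  · -- cube inside u ++ seg i (2 LU)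
    apply hcf x hx
    have h1 : (x ++ x ++ x) <:+: (u ++ seg i M).take (s.length + 3 * x.length) := by
      apply infix_take s t hw
      simp; omega
    have e : u ++ seg i M = (u ++ seg i (2 * u.length)) ++ seg (i + 2 * u.length) (M - 2 * u.length) := by
      rw [List.append_assoc, ← seg_append, Nat.add_sub_cancel' hM]
    have e2 : u ++ seg i (2 * u.length) = (u ++ seg i M).take (3 * u.length) := by
      rw [e, List.take_left' (by simp [seg_length]; omega)]
    have h2 : (u ++ seg i M).take (s.length + 3 * x.length) <+: u ++ seg i (2 * u.length) := by
      rw [e2, show (u ++ seg i M).take (s.length + 3 * x.length)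
          = ((u ++ seg i M).take (3 * u.length)).take (s.length + 3 * x.length) by
        rw [List.take_take, min_eq_left hA]]
      exact List.take_prefix _ _
    exact h1.trans h2.isInfix
  · rcases le_or_gt u.length s.length with hup | hup
    · -- cube fully in seg region
      obtain ⟨k, hk, hne⟩ := tm_no_overlap x.length hq1 (i + (s.length - u.length))
      apply hne
      have h1 := cube_period s t hw k (by omega) (by omega) (by omega)
      rw [hmid _ (by omega) (by omega), hmid _ (by omega) (by omega)] at h1
      rw [show i + (s.length - u.length) + k + x.length
          = i + (s.length + k + x.length - u.length) by omega,
        show i + (s.length - u.length) + k = i + (s.length + k - u.length) by omega]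
      exact h1
    · -- cube straddles the boundary
      have hpq : u.length < s.length + x.length := by omega
      obtain ⟨k, hk, hne⟩ := tm_no_overlap x.length hq1 i
      apply hne
      have h2q : 2 * x.length < M := by omega
      have h1 := cube_period' s t hw (u.length + k - s.length) (by omega)
        (u.length + k) (u.length + k + x.length) (by omega) (by omega) (by omega) (by omega)
      rw [hmid _ (by omega) (by omega), hmid _ (by omega) (by omega)] at h1
      rw [show u.length + k - u.length = k by omega,
        show u.length + k + x.length - u.length = k + x.length by omega] at h1
      rw [show i + k + x.length = i + (k + x.length) by omega]
      exact h1

lemma tm_three : tm 3 = false := by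
  have h1 : tm 1 = true := by
    have := tm_two_one 0
    rw [tm_zero] at this
    simpa using this
  have := tm_two_one 1
  rw [h1] at this
  simpa using this

theorem transition_via_thue_morse (u v u₁ v₁ : List Bool)
    (hu : Cubefree u) (hv : Cubefree v)
    (hu₁ : Cubefree (u ++ u₁)) (hu₁T : FactorOfInf u₁ tm) (hu₁l : u₁.length = 2 * u.length)
    (hv₁ : Cubefree (v ++ v₁)) (hv₁T : FactorOfInf v₁ tm) (hv₁l : v₁.length = 2 * v.length) :
    ∃ w : List Bool, Cubefree (u ++ w ++ v.reverse) := by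
  obtain ⟨iu, hiu⟩ := hu₁T
  obtain ⟨iv, hiv⟩ := hv₁T
  rw [hu₁l] at hiu
  rw [hv₁l] at hiv
  have hiu : u₁ = seg iu (2 * u.length) := hiu
  have hiv : v₁ = seg iv (2 * v.length) := hiv
  -- reverse occurrence of v₁
  set c := iv + 2 * v.length with hc
  have hc4 : iv + 2 * v.length ≤ 4 ^ c := le_of_lt (Nat.lt_pow_self (n := c) (by norm_num))
  set j1 := 4 ^ c - iv - 2 * v.length with hj1
  have hrev1 : v₁.reverse = seg j1 (2 * v.length) := by
    rw [hiv, seg_reverse c iv (2 * v.length) hc4]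
  -- shift it far to the right
  set e := j1 + 2 * v.length + iu + 2 * u.length + 3 with he
  have he2 : e < 2 ^ e := Nat.lt_two_pow_self
  set j := 2 ^ e * 3 + j1 with hj
  have hrevj : v₁.reverse = seg j (2 * v.length) := by
    rw [hrev1, hj, seg_shift e 3 j1 (2 * v.length) tm_three (by omega)]
  have hjbig : iu + 2 * u.length + 3 ≤ j := by omega
  set M := j + 2 * v.length - iu with hM
  have hMbig : 2 * u.length + 2 * v.length + 3 ≤ M := by omega
  -- the middle word
  have hsplit : seg iu M = seg iu (M - 2 * v.length) ++ seg j (2 * v.length) := by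
    have := seg_append iu (M - 2 * v.length) (2 * v.length)
    rw [show M - 2 * v.length + 2 * v.length = M by omega, show iu + (M - 2 * v.length) = j by omega] at this
    exact this
  set c' := iu + M with hc'
  have hc'4 : iu + M ≤ 4 ^ c' := le_of_lt (Nat.lt_pow_self (n := c') (by norm_num))
  set i' := 4 ^ c' - iu - M with hi'
  have hv1i' : seg i' (2 * v.length) = v₁ := by
    have h := seg_reverse c' j (2 * v.length) (by omega)
    rw [← hrevj, show 4 ^ c' - j - 2 * v.length = i' by omega] at h
    rw [← h, List.reverse_reverse]
  -- left glue
  have hleft : Cubefree (u ++ seg iu M) := by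
    apply glue u iu M (by omega)
    rw [← hiu]
    exact hu₁
  -- right glue
  have hright : Cubefree (seg iu M ++ v.reverse) := by
    have h2 : Cubefree (v ++ seg i' M) := by
      apply glue v i' M (by omega)
      rw [hv1i']
      exact hv₁
    have h3 := cubefree_reverse h2
    rw [List.reverse_append, seg_reverse c' i' M (by omega),
      show 4 ^ c' - i' - M = iu by omega] at h3
    exact h3
  -- final assembly
  refine ⟨seg iu M, ?_⟩
  intro x hx hinf
  obtain ⟨s, t, hw⟩ := hinf
  have hq1 : 0 < x.length := List.length_pos_iff.mpr hx
  have htotal : s.length + 3 * x.length + t.length = u.length + M + v.length := by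
    have := congrArg List.length hw
    simp [seg_length] at this
    omega
  rcases le_or_gt (s.length + 3 * x.length) (u.length + M) with h1 | h1
  · -- inside u ++ seg iu M
    apply hleft x hx
    have hi1 : (x ++ x ++ x) <:+: (u ++ seg iu M ++ v.reverse).take (s.length + 3 * x.length) := by
      apply infix_take s t hw
      simp
      omega
    have e2 : (u ++ seg iu M ++ v.reverse).take (s.length + 3 * x.length)
        = (u ++ seg iu M).take (s.length + 3 * x.length) := by
      rw [List.take_append,
        show s.length + 3 * x.length - (u ++ seg iu M).length = 0 by
          simp [seg_length]; omega,
        List.take_zero, List.append_nil]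
    rw [e2] at hi1
    exact hi1.trans (List.take_prefix _ _).isInfix
  rcases le_or_gt u.length s.length with h2 | h2
  · -- inside seg iu M ++ v.reverse
    apply hright x hx
    have hi1 : (x ++ x ++ x) <:+: (u ++ seg iu M ++ v.reverse).drop u.length :=
      infix_drop s t hw u.length h2
    have e3 : (u ++ seg iu M ++ v.reverse).drop u.length = seg iu M ++ v.reverse := by
      rw [List.append_assoc, List.drop_left' rfl]
    rwa [e3] at hi1
  · -- straddles both boundaries
    have hWlen : (u ++ seg iu M ++ v.reverse).length = u.length + M + v.length := by
      simp [seg_length]; omega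
    have hmid : ∀ n (h : n < (u ++ seg iu M ++ v.reverse).length), u.length ≤ n → n < u.length + M →
        (u ++ seg iu M ++ v.reverse)[n] = tm (iu + (n - u.length)) := by
      intro n h hn1 hn2
      rw [List.getElem_append_left (as := u ++ seg iu M) (by simp [seg_length]; omega),
        List.getElem_append_right (by omega), seg_getElem]
    have hpq : u.length < s.length + x.length := by omega
    have h2q : 2 * x.length < M := by omega
    obtain ⟨k, hk, hne⟩ := tm_no_overlap x.length hq1 iu
    apply hne
    have hp := cube_period' s t hw (u.length + k - s.length) (by omega)
      (u.length + k) (u.length + k + x.length) (by omega) (by omega) (by omega) (by omega)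
    rw [hmid _ (by omega) (by omega) (by omega), hmid _ (by omega) (by omega) (by omega)] at hp
    rw [show u.length + k - u.length = k by omega, show u.length + k + x.length - u.length = k + x.length by omega] at hp
    rw [show iu + k + x.length = iu + (k + x.length) by omega]
    exact hp
end

section
/- The Thue–Morse word is overlap-free: it contains no factor of the form c·w·c·w·c where c is a letter and w is a (possibly empty) word. -/
lemma tm_even (n : ℕ) : tm (2*n) = tm n := by
  rcases Nat.eq_zero_or_pos n with h | h
  · simp [h]
  · unfold tm
    rw [Nat.digits_def' (by norm_num) (by omega)]
    have h1 : (2*n) % 2 = 0 := by omega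
    have h2 : (2*n) / 2 = n := by omega
    rw [h1, h2, List.sum_cons, Nat.zero_add]

lemma tm_odd (n : ℕ) : tm (2*n+1) = !tm n := by
  unfold tm
  rw [Nat.digits_def' (by norm_num) (by omega)]
  have h1 : (2*n+1) % 2 = 1 := by omega
  have h2 : (2*n+1) / 2 = n := by omega
  rw [h1, h2, List.sum_cons]
  set s := (Nat.digits 2 n).sum with hs
  rcases Nat.mod_two_eq_zero_or_one s with h | h
  · have e : (1+s) % 2 = 1 := by omega
    rw [e, h]; rfl
  · have e : (1+s) % 2 = 0 := by omega
    rw [e, h]; rfl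

lemma no_three (m : ℕ) : ¬ (tm m = tm (m+1) ∧ tm (m+1) = tm (m+2)) := by
  rintro ⟨h1, h2⟩
  rcases Nat.even_or_odd m with ⟨j, hj⟩ | ⟨j, hj⟩
  · rw [show m = 2*j by omega, tm_even, tm_odd] at h1
    exact (Bool.not_ne_self _ (h1.symm)).elim
  · rw [show m+1 = 2*(j+1) by omega] at h2
    rw [show m+2 = 2*(j+1)+1 by omega] at h2
    rw [tm_even, tm_odd] at h2
    exact (Bool.not_ne_self _ (h2.symm)).elim

lemma tm_no_period : ∀ n, 1 ≤ n → ∀ k, ¬ (∀ j ≤ n, tm (k+j) = tm (k+j+n)) := by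
  intro n
  induction n using Nat.strong_induction_on with
  | _ n IH =>
    intro hn k H
    have Key : ∀ x y j, j ≤ n → x = k + j → y = k + j + n → tm x = tm y := by
      rintro x y j hj rfl rfl; exact H j hj
    rcases Nat.even_or_odd n with ⟨m, hm⟩ | ⟨b, hb⟩
    · -- n = 2m, m ≥ 1
      have hm1 : 1 ≤ m := by omega
      apply IH m (by omega) hm1 (k/2)
      intro j hj
      rcases Nat.even_or_odd k with ⟨a, ha⟩ | ⟨a, ha⟩
      · have e : tm (2*(a+j)) = tm (2*(a+j+m)) :=
          Key _ _ (2*j) (by omega) (by omega) (by omega)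
        rw [tm_even, tm_even] at e
        rw [show k/2+j = a+j by omega]
        exact e
      · rcases Nat.eq_zero_or_pos j with hj0 | hj0
        · subst hj0
          have e : tm (2*a+1) = tm (2*(a+m)+1) :=
            Key _ _ 0 (by omega) (by omega) (by omega)
          rw [tm_odd, tm_odd] at e
          rw [show k/2+0 = a by omega]
          simpa using e
        · have e : tm (2*(a+j)) = tm (2*(a+j+m)) :=
            Key _ _ (2*j-1) (by omega) (by omega) (by omega)
          rw [tm_even, tm_even] at e
          rw [show k/2+j = a+j by omega]
          exact e
    · -- n odd
      rcases Nat.eq_or_lt_of_le hn with h1 | h3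
      · have e0 := H 0 (by omega)
        have e1 := H 1 (by omega)
        rw [← h1] at e0 e1
        exact no_three k ⟨by simpa using e0, by simpa using e1⟩
      · have hb1 : 1 ≤ b := by omega
        rcases Nat.even_or_odd k with ⟨a, ha⟩ | ⟨a, ha⟩
        · have e0 : tm (2*a) = tm (2*(a+b)+1) := Key _ _ 0 (by omega) (by omega) (by omega)
          have e1 : tm (2*a+1) = tm (2*(a+b+1)) := Key _ _ 1 (by omega) (by omega) (by omega)
          have e2 : tm (2*(a+1)) = tm (2*(a+b+1)+1) := Key _ _ 2 (by omega) (by omega) (by omega)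
          have e3 : tm (2*(a+1)+1) = tm (2*(a+b+2)) := Key _ _ 3 (by omega) (by omega) (by omega)
          rw [tm_even, tm_odd] at e0
          rw [tm_odd, tm_even] at e1
          rw [tm_even, tm_odd] at e2
          rw [tm_odd, tm_even] at e3
          apply no_three (a+b)
          refine ⟨?_, ?_⟩
          · have f0 : tm (a+b) = !tm a := by rw [e0]; simp
            exact f0.trans e1
          · have f2 : tm (a+b+1) = !tm (a+1) := by rw [e2]; simp
            exact f2.trans e3
        · have e0 : tm (2*a+1) = tm (2*(a+b+1)) := Key _ _ 0 (by omega) (by omega) (by omega)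
          have e1 : tm (2*(a+1)) = tm (2*(a+b+1)+1) := Key _ _ 1 (by omega) (by omega) (by omega)
          have e2 : tm (2*(a+1)+1) = tm (2*(a+b+2)) := Key _ _ 2 (by omega) (by omega) (by omega)
          have e3 : tm (2*(a+2)) = tm (2*(a+b+2)+1) := Key _ _ 3 (by omega) (by omega) (by omega)
          rw [tm_odd, tm_even] at e0
          rw [tm_even, tm_odd] at e1
          rw [tm_odd, tm_even] at e2
          rw [tm_even, tm_odd] at e3
          apply no_three a
          refine ⟨?_, ?_⟩
          · rw [← e0] at e1; simpa using e1.symm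
          · rw [← e2] at e3
            rw [show a+2 = a+1+1 by ring] at e3
            simpa using e3.symm


theorem thue_morse_overlap_free (c : Bool) (w : List Bool) :
    ¬ FactorOfInf ([c] ++ w ++ [c] ++ w ++ [c]) tm := by
  rintro ⟨i, h⟩
  set u : List Bool := c :: w with hu
  set n : ℕ := w.length + 1 with hn
  set L : List Bool := [c] ++ w ++ [c] ++ w ++ [c] with hLdef
  have hL : L = u ++ (u ++ [c]) := by simp [hLdef, hu]
  have hlen : L.length = 2*n + 1 := by simp [hL, hu, hn]; omega
  have hun : u.length = n := by simp [hu, hn]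
  have hget : ∀ j (hj : j < L.length), L[j] = tm (i + j) := by
    intro j hj
    rw [List.getElem_of_eq h hj]
    simp
  apply tm_no_period n (by omega) i
  intro j hj
  have p1 : j < L.length := by omega
  have p2 : j + n < L.length := by omega
  rw [show i+j+n = i+(j+n) by ring, ← hget j p1, ← hget (j+n) p2]
  rcases Nat.lt_or_ge j n with hjn | hjn
  · have q1 : j < u.length := by omega
    have l1 : L[j]'p1 = u[j] := by
      rw [List.getElem_of_eq hL]
      exact List.getElem_append_left _
    have l2 : L[j+n]'p2 = u[j] := by
      rw [List.getElem_of_eq hL]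
      rw [List.getElem_append_right (by omega)]
      rw [List.getElem_append_left]
      · congr 1; omega
      · omega
    rw [l1, l2]
  · have hje : j = n := by omega
    subst hje
    have l1 : L[n]'p1 = c := by
      rw [List.getElem_of_eq hL]
      rw [List.getElem_append_right (by omega)]
      rw [List.getElem_append_left (by simp [hu]; omega)]
      simp [hu, hun, hn]
    have l2 : L[n+n]'p2 = c := by
      rw [List.getElem_of_eq hL]
      rw [List.getElem_append_right (by omega)]
      rw [List.getElem_append_right (by omega)]
      simp
    rw [l1, l2]
end
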